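/- Let X be a reflexive real Banach space, let F ⊆ X be a nonempty closed bounded convex set, and let Ω_1, …, Ω_n ⊆ X be nonempty closed convex sets at least one of which is bounded. If inf_{x ∈ X} T(x) < ∞ for T(x) := Σ_{i=1}^n T^F_{Ω_i}(x), then there exists x̄ ∈ X with T(x̄) = inf_{x ∈ X} T(x), i.e., the generalized Fermat–Torricelli problem of minimizing T over X admits an optimal solution. -/

import Mathlib

/-!
Work in the weak topology. The sublevel set `{T^F_Ω ≤ a}` is the intersection over `s > a` of
`Ω - [0, s] • F`. In a reflexive space the bounded closed convex set `F` is weakly compact, and a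
closed convex `Ω` is weakly closed, so these sets are weakly closed and `T^F_Ω` is weakly lower
semicontinuous. If `Ω_{i₀}` is bounded it is weakly compact as well, so every sublevel set of
`T = ∑ i, T^F_{Ω_i}` is a weakly closed subset of the weakly compact set `Ω_{i₀} - [0, s] • F`.
A lower semicontinuous function with compact sublevel sets attains its infimum.
-/

/-- The minimal time function `T^F_Ω(x) := inf{t ≥ 0 : Ω ∩ (x + tF) ≠ ∅}`,
with values in the extended reals (`sInf ∅ = ⊤`). -/
noncomputable def minTime {X : Type*} [AddCommGroup X] [Module ℝ X]
    (F Ω : Set X) (x : X) : EReal :=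
  sInf {r : EReal | ∃ t : ℝ, 0 ≤ t ∧ r = (t : EReal) ∧ ∃ f ∈ F, x + t • f ∈ Ω}

open Set Pointwise

theorem LowerSemicontinuous.exists_forall_le_of_isCompact_setOf_le {α β : Type*}
    [TopologicalSpace α] [Nonempty α] [LinearOrder β] [OrderTop β] {f : α → β}
    (hf : LowerSemicontinuous f) (hK : ∀ c < ⊤, IsCompact {x | f x ≤ c}) :
    ∃ x, ∀ y, f x ≤ f y := by
  rcases em (∃ x₀, f x₀ ≠ ⊤) with ⟨x₀, hx₀⟩ | htop
  · obtain ⟨x, hx, hmin⟩ := (hf.lowerSemicontinuousOn _).exists_isMinOn ⟨x₀, le_refl (f x₀)⟩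
      (hK (f x₀) (lt_top_iff_ne_top.2 hx₀))
    refine ⟨x, fun y => ?_⟩
    rcases le_total (f y) (f x₀) with hy | hy
    · exact hmin hy
    · exact hx.trans hy
  · simp only [ne_eq, not_exists, not_not] at htop
    obtain ⟨x⟩ := ‹Nonempty α›
    exact ⟨x, fun y => htop y ▸ le_top⟩

theorem lowerSemicontinuous_sum_of_nonneg {ι α : Type*} [TopologicalSpace α]
    {f : ι → α → EReal} {s : Finset ι} (hf : ∀ i ∈ s, LowerSemicontinuous (f i))
    (h0 : ∀ i ∈ s, ∀ x, 0 ≤ f i x) : LowerSemicontinuous fun x => ∑ i ∈ s, f i x := by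
  classical
  induction s using Finset.induction_on with
  | empty => simpa using lowerSemicontinuous_const
  | insert i s hi ih =>
    simp only [Finset.sum_insert hi]
    have hfi := Finset.mem_insert_self i s
    have hs : ∀ j ∈ s, j ∈ insert i s := fun j => Finset.mem_insert_of_mem
    refine (hf i hfi).add' (ih (fun j hj => hf j (hs j hj)) (fun j hj => h0 j (hs j hj)))
      fun x => EReal.continuousAt_add (Or.inr ?_) (Or.inl ?_)
    · exact ne_bot_of_le_ne_bot EReal.zero_ne_bot (Finset.sum_nonneg fun j hj => h0 j (hs j hj) x)
    · exact ne_bot_of_le_ne_bot EReal.zero_ne_bot (h0 i hfi x)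

section minTime

variable {E : Type*} [AddCommGroup E] [Module ℝ E] {F Ω : Set E} {x : E}

lemma minTime_nonneg (F Ω : Set E) (x : E) : 0 ≤ minTime F Ω x :=
  le_sInf <| by rintro _ ⟨t, ht, rfl, -⟩; exact_mod_cast ht

lemma minTime_le_of_add_smul_mem {t : ℝ} (ht : 0 ≤ t) {f : E} (hf : f ∈ F)
    (hx : x + t • f ∈ Ω) : minTime F Ω x ≤ t :=
  sInf_le ⟨t, ht, rfl, f, hf, hx⟩

lemma minTime_lt_coe_iff {s : ℝ} :
    minTime F Ω x < s ↔ ∃ t ∈ Ico 0 s, ∃ f ∈ F, x + t • f ∈ Ω := by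
  simp only [minTime, sInf_lt_iff, mem_ofPred_eq]
  constructor
  · rintro ⟨_, ⟨t, ht, rfl, hΩ⟩, hts⟩
    exact ⟨t, ⟨ht, by exact_mod_cast hts⟩, hΩ⟩
  · rintro ⟨t, ⟨ht, hts⟩, hΩ⟩
    exact ⟨t, ⟨t, ht, rfl, hΩ⟩, by exact_mod_cast hts⟩

lemma mem_sub_Icc_smul_iff {s : ℝ} :
    x ∈ Ω - Icc 0 s • F ↔ ∃ t ∈ Icc 0 s, ∃ f ∈ F, x + t • f ∈ Ω := by
  simp only [mem_sub, mem_smul]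
  constructor
  · rintro ⟨ω, hω, _, ⟨t, ht, f, hf, rfl⟩, rfl⟩
    exact ⟨t, ht, f, hf, by simpa using hω⟩
  · rintro ⟨t, ht, f, hf, hx⟩
    exact ⟨_, hx, _, ⟨t, ht, f, hf, rfl⟩, by abel⟩

lemma minTime_le_coe_iff {a : ℝ} : minTime F Ω x ≤ a ↔ ∀ s > a, x ∈ Ω - Icc 0 s • F := by
  simp only [mem_sub_Icc_smul_iff]
  constructor
  · intro hx s hs
    obtain ⟨t, ht, hΩ⟩ := minTime_lt_coe_iff.1 <| hx.trans_lt (EReal.coe_lt_coe_iff.2 hs)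
    exact ⟨t, Ico_subset_Icc_self ht, hΩ⟩
  · refine fun hx => EReal.le_of_forall_lt_iff_le.1 fun s hs => ?_
    obtain ⟨t, ht, f, hf, hΩ⟩ := hx s (EReal.coe_lt_coe_iff.1 hs)
    exact (minTime_le_of_add_smul_mem ht.1 hf hΩ).trans (EReal.coe_le_coe_iff.2 ht.2)

lemma minTime_image_linearEquiv {E' : Type*} [AddCommGroup E'] [Module ℝ E'] (e : E ≃ₗ[ℝ] E')
    (F Ω : Set E) (x : E) : minTime (e '' F) (e '' Ω) (e x) = minTime F Ω x := by
  simp only [minTime, exists_mem_image, ← map_smul, ← map_add, e.injective.mem_set_image]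

end minTime

section topological

variable {E : Type*} [AddCommGroup E] [Module ℝ E] [TopologicalSpace E] [IsTopologicalAddGroup E]
  [ContinuousSMul ℝ E] {F Ω : Set E}

lemma isClosed_setOf_minTime_le (hF : IsCompact F) (hΩ : IsClosed Ω) (a : ℝ) :
    IsClosed {x | minTime F Ω x ≤ a} := by
  simp only [minTime_le_coe_iff, ofPred_forall]
  refine isClosed_iInter fun s => isClosed_iInter fun _ => ?_
  rw [ofPred_mem_eq, sub_eq_add_neg]
  exact hΩ.add_right_of_isCompact (isCompact_Icc.smul_set hF).neg

lemma lowerSemicontinuous_minTime (hF : IsCompact F) (hΩ : IsClosed Ω) :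
    LowerSemicontinuous (minTime F Ω) := by
  refine lowerSemicontinuous_iff_isClosed_preimage.2 fun y => ?_
  have : minTime F Ω ⁻¹' Iic y = ⋂ (a : ℝ) (_ : y < a), {x | minTime F Ω x ≤ a} := by
    ext x
    simp [EReal.le_of_forall_lt_iff_le]
  rw [this]
  exact isClosed_iInter fun a => isClosed_iInter fun _ => isClosed_setOf_minTime_le hF hΩ a

lemma isCompact_of_subset_setOf_minTime_le (hF : IsCompact F) (hΩ : IsCompact Ω) {K : Set E}
    (hK : IsClosed K) {a : ℝ} (hKa : ∀ x ∈ K, minTime F Ω x ≤ a) : IsCompact K := by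
  refine IsCompact.of_isClosed_subset ?_ hK fun x hx => minTime_le_coe_iff.1 (hKa x hx) (a + 1)
    (lt_add_one a)
  rw [sub_eq_add_neg]
  exact hΩ.add (isCompact_Icc.smul_set hF).neg

end topological

section weak

variable {X : Type*} [NormedAddCommGroup X] [NormedSpace ℝ X] {C : Set X}

lemma Convex.isClosed_toWeakSpace_image (hC : Convex ℝ C) (hcl : IsClosed C) :
    IsClosed (toWeakSpace ℝ X '' C) := by
  rw [← closure_eq_iff_isClosed, ← hC.toWeakSpace_closure ℝ, hcl.closure_eq]

lemma Convex.isCompact_toWeakSpace_image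
    (hrefl : Function.Surjective (NormedSpace.inclusionInDoubleDual ℝ X))
    (hC : Convex ℝ C) (hcl : IsClosed C) (hb : Bornology.IsBounded C) :
    IsCompact (toWeakSpace ℝ X '' C) := by
  rw [← (hC.isClosed_toWeakSpace_image hcl).closure_eq]
  refine NormedSpace.isCompact_closure_of_isBounded ℝ X _ ?_ fun φ _ => ?_
  · rwa [(toWeakSpace ℝ X).injective.preimage_image]
  · obtain ⟨x, hx⟩ := hrefl φ
    exact ⟨toWeakSpace ℝ X x, hx⟩

end weak

theorem stmt_5_general {X : Type*} [NormedAddCommGroup X] [NormedSpace ℝ X]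
    (hrefl : Function.Surjective (NormedSpace.inclusionInDoubleDual ℝ X))
    (F : Set X) (hFcl : IsClosed F)
    (hFbd : Bornology.IsBounded F) (hFconv : Convex ℝ F)
    (n : ℕ) (Ω : Fin n → Set X)
    (hΩcl : ∀ i, IsClosed (Ω i))
    (hΩconv : ∀ i, Convex ℝ (Ω i))
    (hbd : ∃ i, Bornology.IsBounded (Ω i)) :
    ∃ xb : X, (∑ i, minTime F (Ω i) xb) = ⨅ x : X, ∑ i, minTime F (Ω i) x := by
  set e := toWeakSpace ℝ X
  set G : WeakSpace ℝ X → EReal := fun y => ∑ i, minTime (e '' F) (e '' Ω i) y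
  have hG : ∀ x, G (e x) = ∑ i, minTime F (Ω i) x := fun x => by
    simp only [G, minTime_image_linearEquiv]
  have hF : IsCompact (e '' F) := hFconv.isCompact_toWeakSpace_image hrefl hFcl hFbd
  have hlsc : LowerSemicontinuous G := lowerSemicontinuous_sum_of_nonneg
    (fun i _ => lowerSemicontinuous_minTime hF ((hΩconv i).isClosed_toWeakSpace_image (hΩcl i)))
    (fun i _ => minTime_nonneg _ _)
  obtain ⟨i₀, hi₀⟩ := hbd
  have hK : ∀ c < ⊤, IsCompact {y | G y ≤ c} := fun c hc =>
    isCompact_of_subset_setOf_minTime_le hF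
      ((hΩconv i₀).isCompact_toWeakSpace_image hrefl (hΩcl i₀) hi₀) (hlsc.isClosed_preimage c)
      fun y (hy : G y ≤ c) => calc
        minTime (e '' F) (e '' Ω i₀) y ≤ G y :=
          Finset.single_le_sum (f := fun i => minTime (e '' F) (e '' Ω i) y)
            (fun i _ => minTime_nonneg _ _ y) (Finset.mem_univ i₀)
        _ ≤ c := hy
        _ ≤ c.toReal := EReal.le_coe_toReal hc.ne
  obtain ⟨y, hy⟩ := hlsc.exists_forall_le_of_isCompact_setOf_le hK
  refine ⟨e.symm y, le_antisymm (le_iInf fun x => ?_) (iInf_le _ _)⟩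
  rw [← hG, ← hG, e.apply_symm_apply]
  exact hy (e x)

/-- Existence of optimal solutions to the generalized Fermat–Torricelli problem
with convex targets in a reflexive Banach space (reflexivity is expressed by the
surjectivity of the canonical embedding into the double dual). -/
theorem stmt_5 {X : Type*} [NormedAddCommGroup X] [NormedSpace ℝ X] [CompleteSpace X]
    (hrefl : Function.Surjective (NormedSpace.inclusionInDoubleDual ℝ X))
    (F : Set X) (hFne : F.Nonempty) (hFcl : IsClosed F)
    (hFbd : Bornology.IsBounded F) (hFconv : Convex ℝ F)
    (n : ℕ) (Ω : Fin n → Set X)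
    (hΩne : ∀ i, (Ω i).Nonempty) (hΩcl : ∀ i, IsClosed (Ω i))
    (hΩconv : ∀ i, Convex ℝ (Ω i))
    (hbd : ∃ i, Bornology.IsBounded (Ω i))
    (hfin : (⨅ x : X, ∑ i, minTime F (Ω i) x) ≠ ⊤) :
    ∃ xb : X, (∑ i, minTime F (Ω i) xb) = ⨅ x : X, ∑ i, minTime F (Ω i) x :=
  stmt_5_general hrefl F hFcl hFbd hFconv n Ω hΩcl hΩconv hbd
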